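/- Let T be a tree, α, β vertices of T, and suppose a group G acts on T by automorphisms such that ⟨G_α, G_β⟩ = G and the orbit of β under G contains α. Suppose y is an interior vertex of the geodesic [α, β]_T with d_T(y, α) ≤ d_T(y, β) and G_{α,y} = G_{β,y}. If moreover G_{α,y} fixes β, then one derives a contradiction; hence α is not in the orbit of β under ⟨G_α, G_β⟩ whenever G_{α,y} = G_{β,y} ≤ G_β. -/

import Mathlib

open Pointwise

/-- A permutation preserves a directed edge relation. -/
def DPreserves {V : Type*} (E : V → V → Prop) (g : Equiv.Perm V) : Prop :=
  ∀ a b : V, E (g a) (g b) ↔ E a b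

/-- The automorphism group of the directed graph with edge relation `E`,
as a subgroup of the symmetric group. -/
def autSub {V : Type*} (E : V → V → Prop) : Subgroup (Equiv.Perm V) where
  carrier := {g | DPreserves E g}
  one_mem' := fun _ _ => Iff.rfl
  mul_mem' := by
    intro g h hg hh a b
    exact (hg (h a) (h b)).trans (hh a b)
  inv_mem' := by
    intro g hg a b
    simpa using (hg (g⁻¹ a) (g⁻¹ b)).symm

/-- A subgroup of the symmetric group acts primitively: it is transitive and the only
invariant equivalence relations are the trivial and the universal ones. -/
def IsPrimitiveSub {X : Type*} (G : Subgroup (Equiv.Perm X)) : Prop :=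
  (∀ a b : X, ∃ g ∈ G, g a = b) ∧
    ∀ r : Setoid X, (∀ g ∈ G, ∀ a b : X, r.r a b ↔ r.r (g a) (g b)) →
      (∀ a b : X, r.r a b ↔ a = b) ∨ ∀ a b : X, r.r a b

/-- A subgroup of the symmetric group acts regularly: transitively with trivial
point stabilisers. -/
def IsRegularSub {X : Type*} (G : Subgroup (Equiv.Perm X)) : Prop :=
  (∀ a b : X, ∃ g ∈ G, g a = b) ∧ ∀ g ∈ G, ∀ a : X, g a = a → g = 1

/-- `a` is a cut vertex of `Γ`: deleting it disconnects the graph. -/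
def IsCutVertexOf {V : Type*} (Γ : SimpleGraph V) (a : V) : Prop :=
  ¬ (Γ.induce {v | v ≠ a}).Preconnected

/-- `Γ` is connected and has connectivity one. -/
def HasConnOne {V : Type*} (Γ : SimpleGraph V) : Prop :=
  Γ.Connected ∧ ∃ a, IsCutVertexOf Γ a

/-- `B` is (the vertex set of) a block of `Γ`: a connected induced subgraph with no cut
vertex of its own, maximal with these properties. -/
def IsBlockOf {V : Type*} (Γ : SimpleGraph V) (B : Set V) : Prop :=
  (Γ.induce B).Connected ∧ (∀ b ∈ B, (Γ.induce (B \ {b})).Preconnected) ∧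
    ∀ C : Set V, B ⊆ C → (Γ.induce C).Connected →
      (∀ c ∈ C, (Γ.induce (C \ {c})).Preconnected) → B = C

/-- Vertex type of the block-cut-vertex tree: cut vertices plus blocks. -/
def BCVertex {V : Type*} (Γ : SimpleGraph V) : Type _ :=
  {a : V // IsCutVertexOf Γ a} ⊕ {B : Set V // IsBlockOf Γ B}

/-- The block-cut-vertex tree: a cut vertex is adjacent to the blocks containing it. -/
def bcTree {V : Type*} (Γ : SimpleGraph V) : SimpleGraph (BCVertex Γ) :=
  SimpleGraph.fromRel (fun x y =>
    ∃ (a : {a : V // IsCutVertexOf Γ a}) (B : {B : Set V // IsBlockOf Γ B}),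
      x = Sum.inl a ∧ y = Sum.inr B ∧ (a : V) ∈ (B : Set V))

/-- The stabiliser (in the full symmetric group) of a vertex of the block-cut-vertex
tree: the point stabiliser for a cut vertex, the setwise stabiliser for a block. -/
def bcStab {V : Type*} {Γ : SimpleGraph V} (x : BCVertex Γ) : Subgroup (Equiv.Perm V) :=
  match x with
  | Sum.inl a => MulAction.stabilizer (Equiv.Perm V) (a : V)
  | Sum.inr B => MulAction.stabilizer (Equiv.Perm V) (B : Set V)

/-- `z` lies on a geodesic between `a` and `b`. -/
def OnGeodesic {W : Type*} (T : SimpleGraph W) (a b z : W) : Prop :=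
  T.dist a z + T.dist z b = T.dist a b

/-- `a` and `b` lie in the same connected component of `T` with the vertex `y` deleted. -/
def SameCompAvoiding {W : Type*} (T : SimpleGraph W) (y a b : W) : Prop :=
  ∃ (ha : a ≠ y) (hb : b ≠ y), (T.induce {v | v ≠ y}).Reachable ⟨a, ha⟩ ⟨b, hb⟩

/-- `B` and `C` are isomorphic as directed graphs (with edge relation `E`). -/
def BlocksIsomorphic {V : Type*} (E : V → V → Prop) (B C : Set V) : Prop :=
  ∃ e : B ≃ C, ∀ a b : B, E (a : V) (b : V) ↔ E (e a : V) (e b : V)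

/-- The automorphism group of the directed graph induced on `B`. -/
def BlockAut {V : Type*} (E : V → V → Prop) (B : Set V) : Subgroup (Equiv.Perm B) :=
  autSub (fun a b : B => E (a : V) (b : V))

/-- `B` has at least three vertices. -/
def HasThreeVertices {V : Type*} (B : Set V) : Prop :=
  ∃ x y z : V, x ∈ B ∧ y ∈ B ∧ z ∈ B ∧ x ≠ y ∧ x ≠ z ∧ y ≠ z

/-- Primitivity for an abstract group action: transitivity, and the only invariant
equivalence relations are the trivial and the universal ones. -/
def IsPrimAction (G Ω : Type*) [Group G] [MulAction G Ω] : Prop :=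
  MulAction.IsPretransitive G Ω ∧
    ∀ r : Setoid Ω, (∀ (g : G) (a b : Ω), r.r a b ↔ r.r (g • a) (g • b)) →
      (∀ a b : Ω, r.r a b ↔ a = b) ∨ ∀ a b : Ω, r.r a b

/-!
Write `K = G_{α,y} = G_{β,y}`. Every element of `⟨G_α, G_β⟩` is a word `x₁ ⋯ xₙ b` with
`b ∈ G_β` and the `xᵢ` alternating between `G_α \ K` and `G_β \ K`. An automorphism fixing `α`
but not `y` sends every vertex `δ` with `y ∉ [β, δ]` to a vertex `δ'` with `y ∉ [α, δ']` and
`d(y, δ') > d(y, δ)`, and symmetrically with `α` and `β` exchanged. Applying the letters of the word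
to `β` from the right therefore ping-pongs between the two sides of `y`: the image of `β` either
lies on the `β`-side, or on the `α`-side at distance more than `d(y, β) ≥ d(y, α)` from `y`.
Neither is possible for `α`.
-/

open MulAction

namespace SimpleGraph

variable {V V' : Type*} {G : SimpleGraph V} {G' : SimpleGraph V'}

lemma Hom.edist_map_le (f : G →g G') (u v : V) : G'.edist (f u) (f v) ≤ G.edist u v :=
  le_iInf fun p => (edist_le (p.map f)).trans (by simp)

lemma Iso.dist_map (f : G ≃g G') (u v : V) : G'.dist (f u) (f v) = G.dist u v := by
  have h : G.edist u v ≤ G'.edist (f u) (f v) := by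
    simpa using f.symm.toHom.edist_map_le (f u) (f v)
  exact congrArg ENat.toNat (le_antisymm (f.toHom.edist_map_le u v) h)

variable {u v z c c' y δ : V}

lemma onGeodesic_comm : OnGeodesic G u v z ↔ OnGeodesic G v u z := by
  unfold OnGeodesic
  rw [dist_comm (u := u), dist_comm (u := z) (v := v), dist_comm (u := u) (v := v), add_comm]

lemma Iso.onGeodesic_map (f : G ≃g G') :
    OnGeodesic G' (f u) (f v) (f z) ↔ OnGeodesic G u v z := by
  simp only [OnGeodesic, f.dist_map]

lemma Connected.not_onGeodesic_self (hG : G.Connected) (h : z ≠ u) : ¬ OnGeodesic G u u z := by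
  rw [OnGeodesic, dist_self, Nat.add_eq_zero_iff, hG.dist_eq_zero_iff]
  exact fun h' => h h'.1.symm

namespace IsTree

lemma length_eq_dist_of_isPath (hG : G.IsTree) {p : G.Walk u v} (hp : p.IsPath) :
    p.length = G.dist u v := by
  obtain ⟨q, hq, hql⟩ := hG.connected.exists_path_of_dist u v
  obtain rfl : p = q :=
    congrArg Subtype.val ((hG.isAcyclic.subsingleton_path u v).elim ⟨p, hp⟩ ⟨q, hq⟩)
  exact hql

lemma onGeodesic_iff_mem_support (hG : G.IsTree) {p : G.Walk u v} (hp : p.IsPath) :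
    OnGeodesic G u v z ↔ z ∈ p.support := by
  classical
  constructor
  · intro h
    obtain ⟨p₁, -, hl₁⟩ := hG.connected.exists_path_of_dist u z
    obtain ⟨p₂, -, hl₂⟩ := hG.connected.exists_path_of_dist z v
    have hpath : (p₁.append p₂).IsPath :=
      (p₁.append p₂).isPath_of_length_eq_dist (by rw [Walk.length_append, hl₁, hl₂]; exact h)
    obtain rfl : p = p₁.append p₂ :=
      congrArg Subtype.val ((hG.isAcyclic.subsingleton_path u v).elim ⟨p, hp⟩ ⟨_, hpath⟩)
    exact Walk.mem_support_append_iff _ _ |>.mpr (.inr p₂.start_mem_support)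
  · intro hz
    have hlen := congrArg Walk.length (p.take_spec hz)
    rw [Walk.length_append, hG.length_eq_dist_of_isPath (hp.takeUntil hz),
      hG.length_eq_dist_of_isPath (hp.dropUntil hz), hG.length_eq_dist_of_isPath hp] at hlen
    exact hlen

lemma onGeodesic_or_onGeodesic (hG : G.IsTree) (h : OnGeodesic G c c' z) (w : V) :
    OnGeodesic G c w z ∨ OnGeodesic G c' w z := by
  classical
  obtain ⟨p₁, hp₁, -⟩ := hG.connected.exists_path_of_dist c w
  obtain ⟨p₂, hp₂, -⟩ := hG.connected.exists_path_of_dist w c'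
  rw [hG.onGeodesic_iff_mem_support (p₁.append p₂).bypass_isPath] at h
  rw [hG.onGeodesic_iff_mem_support hp₁, onGeodesic_comm, hG.onGeodesic_iff_mem_support hp₂,
    ← Walk.mem_support_append_iff]
  exact (p₁.append p₂).support_bypass_subset_support h

lemma getVert_dist_eq (hG : G.IsTree) {p : G.Walk u v} (hp : p.IsPath) (hz : z ∈ p.support) :
    p.getVert (G.dist u z) = z := by
  classical
  rw [← hG.length_eq_dist_of_isPath (hp.takeUntil hz)]
  exact p.getVert_length_takeUntil hz

lemma eq_of_onGeodesic_of_dist_eq (hG : G.IsTree) {z' : V} (hz : OnGeodesic G u v z)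
    (hz' : OnGeodesic G u v z') (hd : G.dist u z = G.dist u z') : z = z' := by
  obtain ⟨p, hp, -⟩ := hG.connected.exists_path_of_dist u v
  rw [hG.onGeodesic_iff_mem_support hp] at hz hz'
  rw [← hG.getVert_dist_eq hp hz, ← hG.getVert_dist_eq hp hz', hd]

lemma not_onGeodesic_map_of_not_onGeodesic (hG : G.IsTree) (f : G ≃g G)
    (hcc' : OnGeodesic G c c' y) (hc : f c = c) (hy : f y ≠ y) (hδ : ¬ OnGeodesic G c' δ y) :
    ¬ OnGeodesic G c (f δ) y ∧ G.dist y δ < G.dist y (f δ) := by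
  have h := (hG.onGeodesic_or_onGeodesic hcc' δ).resolve_right hδ
  have hfc : ∀ x, G.dist c (f x) = G.dist c x := fun x => by rw [← f.dist_map c x, hc]
  have hfy : OnGeodesic G c (f δ) (f y) := by simpa only [hc] using f.onGeodesic_map.mpr h
  have hno : ¬ OnGeodesic G c (f δ) y := fun h' =>
    hy (hG.eq_of_onGeodesic_of_dist_eq hfy h' (hfc y))
  refine ⟨hno, ?_⟩
  have htri : G.dist c (f δ) ≤ G.dist c y + G.dist y (f δ) := hG.connected.dist_triangle
  unfold OnGeodesic at h hno
  rw [hfc] at htri hno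
  omega

end IsTree

end SimpleGraph

/-- `AltWord A B K c g`: `g = x₁ ⋯ xₙ b` with `b ∈ B` and the `xᵢ` alternately in `A \ K` and
`B \ K`; `c` records whether `x₁ ∈ A \ K`. -/
inductive AltWord {M : Type*} [Group M] (A B K : Subgroup M) : Bool → M → Prop
  | ofB {b : M} : b ∈ B → AltWord A B K false b
  | consA {a g : M} : a ∈ A → a ∉ K → AltWord A B K false g → AltWord A B K true (a * g)
  | consB {b g : M} : b ∈ B → b ∉ K → AltWord A B K true g → AltWord A B K false (b * g)

namespace AltWord

variable {M : Type*} [Group M] {A B K : Subgroup M} {c : Bool} {g : M}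

lemma mul_left_of_mem_K (hKA : K ≤ A) (hKB : K ≤ B) {k : M} (hk : k ∈ K)
    (hg : AltWord A B K c g) : AltWord A B K c (k * g) := by
  cases hg with
  | ofB hb => exact ofB (mul_mem (hKB hk) hb)
  | consA ha haK hg =>
    rw [← mul_assoc]
    exact consA (mul_mem (hKA hk) ha) (by rwa [mul_mem_cancel_left hk]) hg
  | consB hb hbK hg =>
    rw [← mul_assoc]
    exact consB (mul_mem (hKB hk) hb) (by rwa [mul_mem_cancel_left hk]) hg

lemma mul_left_of_mem_A (hKA : K ≤ A) (hKB : K ≤ B) {a : M} (ha : a ∈ A)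
    (hg : AltWord A B K c g) : ∃ c', AltWord A B K c' (a * g) := by
  by_cases haK : a ∈ K
  · exact ⟨c, hg.mul_left_of_mem_K hKA hKB haK⟩
  cases hg with
  | ofB hb => exact ⟨true, consA ha haK (ofB hb)⟩
  | consB hb hbK hg => exact ⟨true, consA ha haK (consB hb hbK hg)⟩
  | @consA u _ hu _ hg =>
    rw [← mul_assoc]
    by_cases hauK : a * u ∈ K
    · exact ⟨false, hg.mul_left_of_mem_K hKA hKB hauK⟩
    · exact ⟨true, consA (mul_mem ha hu) hauK hg⟩

lemma mul_left_of_mem_B (hKA : K ≤ A) (hKB : K ≤ B) {b : M} (hb : b ∈ B)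
    (hg : AltWord A B K c g) : ∃ c', AltWord A B K c' (b * g) := by
  by_cases hbK : b ∈ K
  · exact ⟨c, hg.mul_left_of_mem_K hKA hKB hbK⟩
  cases hg with
  | ofB hb' => exact ⟨false, ofB (mul_mem hb hb')⟩
  | consA ha haK hg => exact ⟨false, consB hb hbK (consA ha haK hg)⟩
  | @consB v _ hv _ hg =>
    rw [← mul_assoc]
    by_cases hbvK : b * v ∈ K
    · exact ⟨true, hg.mul_left_of_mem_K hKA hKB hbvK⟩
    · exact ⟨false, consB (mul_mem hb hv) hbvK hg⟩

lemma exists_of_mem_sup (hKA : K ≤ A) (hKB : K ≤ B) (hg : g ∈ A ⊔ B) :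
    ∃ c, AltWord A B K c g := by
  have hmul : ∀ x ∈ (A : Set M) ∪ B, ∀ y, (∃ c, AltWord A B K c y) →
      ∃ c, AltWord A B K c (x * y) := by
    rintro x (hx | hx) y ⟨c, hy⟩
    · exact hy.mul_left_of_mem_A hKA hKB hx
    · exact hy.mul_left_of_mem_B hKA hKB hx
  rw [Subgroup.sup_eq_closure] at hg
  induction hg using Subgroup.closure_induction_left with
  | one => exact ⟨false, ofB B.one_mem⟩
  | mul_left x hx y _ ih => exact hmul x hx y ih
  | inv_mul_cancel x hx y _ ih =>
    refine hmul x⁻¹ ?_ y ih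
    rcases hx with hx | hx
    exacts [.inl (inv_mem hx), .inr (inv_mem hx)]

end AltWord

section PingPong

open SimpleGraph

variable {W : Type*} {T : SimpleGraph W} {A B K : Subgroup (Equiv.Perm W)} {α β y : W}

def autSub.toIso {g : Equiv.Perm W} (hg : g ∈ autSub T.Adj) : T ≃g T :=
  ⟨g, fun {a b} => hg a b⟩

@[simp]
lemma autSub.toIso_apply {g : Equiv.Perm W} (hg : g ∈ autSub T.Adj) (x : W) :
    autSub.toIso hg x = g x :=
  rfl

lemma AltWord.not_onGeodesic_apply (hT : T.IsTree)
    (hA : A ≤ autSub T.Adj ⊓ stabilizer _ α) (hB : B ≤ autSub T.Adj ⊓ stabilizer _ β)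
    (hAK : A ⊓ stabilizer _ y ≤ K) (hBK : B ⊓ stabilizer _ y ≤ K)
    (hgeo : OnGeodesic T α β y) (hyβ : y ≠ β) {c : Bool} {g : Equiv.Perm W}
    (hg : AltWord A B K c g) :
    ¬ OnGeodesic T (cond c α β) (g β) y ∧ T.dist y β + c.toNat ≤ T.dist y (g β) := by
  induction hg with
  | @ofB b hb =>
    have hbβ : b β = β := (hB hb).2
    simpa [hbβ] using hT.connected.not_onGeodesic_self hyβ
  | @consA a g ha haK _ ih =>
    have hay : a y ≠ y := fun h => haK (hAK ⟨ha, h⟩)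
    obtain ⟨hno, hlt⟩ := hT.not_onGeodesic_map_of_not_onGeodesic (autSub.toIso (hA ha).1)
      hgeo (hA ha).2 hay ih.1
    simp only [autSub.toIso_apply] at hno hlt
    simp only [Equiv.Perm.mul_apply, Bool.toNat_false, Bool.toNat_true] at ih ⊢
    exact ⟨hno, by omega⟩
  | @consB b g hb hbK _ ih =>
    have hby : b y ≠ y := fun h => hbK (hBK ⟨hb, h⟩)
    obtain ⟨hno, hlt⟩ := hT.not_onGeodesic_map_of_not_onGeodesic (autSub.toIso (hB hb).1)
      (onGeodesic_comm.mp hgeo) (hB hb).2 hby ih.1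
    simp only [autSub.toIso_apply] at hno hlt
    simp only [Equiv.Perm.mul_apply, Bool.toNat_false, Bool.toNat_true] at ih ⊢
    exact ⟨hno, by omega⟩

end PingPong

theorem stmt14_general {W : Type*} (T : SimpleGraph W) (hT : T.IsTree)
    (G : Subgroup (Equiv.Perm W))
    (hG : ∀ g ∈ G, ∀ a b : W, T.Adj (g a) (g b) ↔ T.Adj a b)
    (α β y : W)
    (hyβ : y ≠ β) (hgeo : OnGeodesic T α β y)
    (hd : T.dist y α ≤ T.dist y β)
    (hstab : G ⊓ MulAction.stabilizer (Equiv.Perm W) α ⊓ MulAction.stabilizer (Equiv.Perm W) y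
           = G ⊓ MulAction.stabilizer (Equiv.Perm W) β ⊓ MulAction.stabilizer (Equiv.Perm W) y) :
    ¬ ∃ g ∈ (G ⊓ MulAction.stabilizer (Equiv.Perm W) α) ⊔
        (G ⊓ MulAction.stabilizer (Equiv.Perm W) β), g β = α := by
  rintro ⟨g, hg, hgβ⟩
  have hGaut : G ≤ autSub T.Adj := hG
  obtain ⟨c, hc⟩ := AltWord.exists_of_mem_sup inf_le_left (hstab.le.trans inf_le_left) hg
  have key := hc.not_onGeodesic_apply hT (inf_le_inf_right _ hGaut) (inf_le_inf_right _ hGaut)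
    le_rfl hstab.ge hgeo hyβ
  rw [hgβ] at key
  cases c
  · exact key.1 (SimpleGraph.onGeodesic_comm.mp hgeo)
  · simp only [Bool.toNat_true] at key
    omega

/-- In a tree with `y` strictly between `α` and `β`, with
`d_T(y,α) ≤ d_T(y,β)` and `G_{α,y} = G_{β,y}`, the vertex `α` is not in the orbit of `β`
under `⟨G_α, G_β⟩`. -/
theorem stmt14 {W : Type*} (T : SimpleGraph W) (hT : T.IsTree)
    (G : Subgroup (Equiv.Perm W))
    (hG : ∀ g ∈ G, ∀ a b : W, T.Adj (g a) (g b) ↔ T.Adj a b)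
    (α β y : W) (hne : α ≠ β)
    (hyα : y ≠ α) (hyβ : y ≠ β) (hgeo : OnGeodesic T α β y)
    (hd : T.dist y α ≤ T.dist y β)
    (hstab : G ⊓ MulAction.stabilizer (Equiv.Perm W) α ⊓ MulAction.stabilizer (Equiv.Perm W) y
           = G ⊓ MulAction.stabilizer (Equiv.Perm W) β ⊓ MulAction.stabilizer (Equiv.Perm W) y) :
    ¬ ∃ g ∈ (G ⊓ MulAction.stabilizer (Equiv.Perm W) α) ⊔
        (G ⊓ MulAction.stabilizer (Equiv.Perm W) β), g β = α :=
  stmt14_general T hT G hG α β y hyβ hgeo hd hstab
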